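/- Axiomatisation of Θ_1: the theory Θ_1 is the deductive closure of the single formula X₁, i.e., for every α ∈ Form₁, α ∈ Θ_1 if and only if {X₁} ⊢ α. -/
import Mathlib


/-- Formulas of Łukasiewicz infinite-valued propositional logic:
propositional variables `var n` (with `X₁ = var 0`), falsum `⊥`, negation, implication. -/
inductive LForm : Type
  | var : ℕ → LForm
  | bot : LForm
  | neg : LForm → LForm
  | imp : LForm → LForm → LForm

namespace LForm

/-- The propositional variable X₁. -/
def X1 : LForm := var 0

/-- Lattice disjunction: α ∨ β := (α → β) → β. -/
def or (α β : LForm) : LForm := imp (imp α β) β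

/-- Lattice conjunction: α ∧ β := ¬(¬α ∨ ¬β). -/
def and (α β : LForm) : LForm := neg (or (neg α) (neg β))

/-- Biconditional: α ↔ β := (α → β) ∧ (β → α). -/
def iff (α β : LForm) : LForm := and (imp α β) (imp β α)

/-- Strong disjunction: α ⊕ β := ¬α → β. -/
def oplus (α β : LForm) : LForm := imp (neg α) β

/-- The predicate "all variables occurring in the formula are X₁". -/
def onlyX1 : LForm → Prop
  | var n => n = 0
  | bot => True
  | neg α => onlyX1 α
  | imp α β => onlyX1 α ∧ onlyX1 β

end LForm

/-- Form₁: the set of formulas built from the single variable X₁ (and ⊥, ¬, →). -/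
def Form1 : Set LForm := { α | α.onlyX1 }

/-- Provability in Łukasiewicz logic from a set `S` of assumptions: the smallest
relation containing the members of `S` and all instances of the axiom schemata
(A0)–(A4), closed under modus ponens. -/
inductive LProv (S : Set LForm) : LForm → Prop
  | hyp {α : LForm} : α ∈ S → LProv S α
  | a0 (α : LForm) : LProv S (LForm.bot.imp α)
  | a1 (α β : LForm) : LProv S (α.imp (β.imp α))
  | a2 (α β γ : LForm) : LProv S ((α.imp β).imp ((β.imp γ).imp (α.imp γ)))
  | a3 (α β : LForm) : LProv S (((α.imp β).imp β).imp ((β.imp α).imp α))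
  | a4 (α β : LForm) : LProv S ((α.neg.imp β.neg).imp (β.imp α))
  | mp {α β : LForm} : LProv S (α.imp β) → LProv S α → LProv S β

/-- A [0,1]-valued evaluation (possible world) for Łukasiewicz logic. -/
structure LEval where
  w : LForm → ℝ
  mem01 : ∀ α, w α ∈ Set.Icc (0 : ℝ) 1
  map_bot : w LForm.bot = 0
  map_neg : ∀ α, w α.neg = 1 - w α
  map_imp : ∀ α β, w (α.imp β) = min 1 (1 - (w α - w β))

/-- Semantic consequence: every evaluation making all of `S` true (value 1)
makes `α` true. -/
def LSem (S : Set LForm) (α : LForm) : Prop :=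
  ∀ v : LEval, (∀ β ∈ S, v.w β = 1) → v.w α = 1

/-- The evaluation determined compositionally by an atomic assignment `v`. -/
def evalFun (v : ℕ → ℝ) : LForm → ℝ
  | .var n => v n
  | .bot => 0
  | .neg α => 1 - evalFun v α
  | .imp α β => min 1 (1 - (evalFun v α - evalFun v β))

/-- Θ_r: the one-variable formulas true (value 1) in every possible world `w`
with `w(X₁) = r`. -/
def Theta (r : ℝ) : Set LForm :=
  { α | α ∈ Form1 ∧ ∀ v : LEval, v.w LForm.X1 = r → v.w α = 1 }

/-- Θ_T: the one-variable formulas true (value 1) in every possible world `w`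
with `w(X₁) ∈ T`. -/
def ThetaT (T : Set ℝ) : Set LForm :=
  { α | α ∈ Form1 ∧ ∀ v : LEval, v.w LForm.X1 ∈ T → v.w α = 1 }

section LAux

/-- Theorem-level syllogism (derived rule). -/
theorem lsyl {S : Set LForm} {a b c : LForm} (h1 : LProv S (a.imp b))
    (h2 : LProv S (b.imp c)) : LProv S (a.imp c) :=
  LProv.mp (LProv.mp (LProv.a2 a b c) h1) h2

theorem thm0 (S : Set LForm) (a b c : LForm) : LProv S (LForm.imp (LForm.imp a b) (LForm.imp (LForm.imp b c) (LForm.imp a c))) :=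
  LProv.a2 a b c

theorem thm1 (S : Set LForm) (a b : LForm) : LProv S (LForm.imp a (LForm.imp b a)) :=
  LProv.a1 a b

theorem thm2 (S : Set LForm) (a b c : LForm) : LProv S (LForm.imp (LForm.imp (LForm.imp a b) c) (LForm.imp b c)) :=
  LProv.mp (thm0 S b (LForm.imp a b) c) (thm1 S b a)

theorem thm3 (S : Set LForm) (a b : LForm) : LProv S (LForm.imp (LForm.imp (LForm.neg a) (LForm.neg b)) (LForm.imp b a)) :=
  LProv.a4 a b

theorem thm4 (S : Set LForm) (a b : LForm) : LProv S (LForm.imp (LForm.neg a) (LForm.imp a b)) :=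
  LProv.mp (thm2 S (LForm.neg b) (LForm.neg a) (LForm.imp a b)) (thm3 S b a)

theorem thm5 (S : Set LForm) (a b : LForm) : LProv S (LForm.imp (LForm.imp (LForm.imp a b) b) (LForm.imp (LForm.imp b a) a)) :=
  LProv.a3 a b

theorem thm6 (S : Set LForm) (a b : LForm) : LProv S (LForm.imp a (LForm.imp (LForm.imp a b) b)) :=
  LProv.mp (thm2 S (LForm.imp b a) a (LForm.imp (LForm.imp a b) b)) (thm5 S b a)

theorem thm7 (S : Set LForm) (a : LForm) : LProv S (LForm.imp LForm.bot a) :=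
  LProv.a0 a

theorem thm8 (S : Set LForm) (a b : LForm) : LProv S (LForm.imp a (LForm.imp LForm.bot b)) :=
  LProv.mp (thm1 S (LForm.imp LForm.bot b) a) (thm7 S b)

theorem thm9 (S : Set LForm) (a b : LForm) : LProv S (LForm.imp (LForm.imp (LForm.imp LForm.bot a) b) b) :=
  LProv.mp (thm5 S b (LForm.imp LForm.bot a)) (thm8 S (LForm.imp b (LForm.imp LForm.bot a)) a)

theorem thm10 (S : Set LForm) (a : LForm) : LProv S (LForm.imp a a) :=
  LProv.mp (thm2 S (LForm.imp LForm.bot LForm.bot) a a) (thm9 S LForm.bot a)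

theorem thm11 (S : Set LForm) (a b c : LForm) : LProv S (LForm.imp (LForm.imp (LForm.imp a b) c) (LForm.imp (LForm.neg a) c)) :=
  LProv.mp (thm0 S (LForm.neg a) (LForm.imp a b) c) (thm4 S a b)

theorem thm12 (S : Set LForm) (a b : LForm) : LProv S (LForm.imp (LForm.neg (LForm.neg a)) (LForm.imp b a)) :=
  LProv.mp (thm11 S (LForm.neg a) (LForm.neg b) (LForm.imp b a)) (thm3 S a b)

theorem thm13 (S : Set LForm) (a b c : LForm) : LProv S (LForm.imp (LForm.imp (LForm.imp a b) c) (LForm.imp (LForm.neg (LForm.neg b)) c)) :=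
  LProv.mp (thm0 S (LForm.neg (LForm.neg b)) (LForm.imp a b) c) (thm12 S b a)

theorem thm14 (S : Set LForm) (a : LForm) : LProv S (LForm.imp (LForm.neg (LForm.neg a)) a) :=
  LProv.mp (thm13 S (LForm.imp LForm.bot LForm.bot) a a) (thm9 S LForm.bot a)

theorem thm15 (S : Set LForm) (a : LForm) : LProv S (LForm.imp a (LForm.neg (LForm.neg a))) :=
  LProv.mp (thm3 S (LForm.neg (LForm.neg a)) a) (thm14 S (LForm.neg a))

theorem thm16 (S : Set LForm) (a b : LForm) : LProv S (LForm.imp (LForm.imp a b) (LForm.imp (LForm.neg (LForm.neg a)) b)) :=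
  LProv.mp (thm0 S (LForm.neg (LForm.neg a)) a b) (thm14 S a)

theorem thm17 (S : Set LForm) (a : LForm) : LProv S (LForm.imp (LForm.neg (LForm.neg LForm.bot)) a) :=
  LProv.mp (thm16 S LForm.bot a) (thm7 S a)

theorem thm18 (S : Set LForm) (a : LForm) : LProv S (LForm.imp a (LForm.neg LForm.bot)) :=
  LProv.mp (thm3 S (LForm.neg LForm.bot) a) (thm17 S (LForm.neg a))

theorem thm19 (S : Set LForm) : LProv S (LForm.neg LForm.bot) :=
  LProv.mp (thm18 S (LForm.imp LForm.bot LForm.bot)) (thm7 S LForm.bot)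

-- L2 = thm4

-- L5 = thm6

-- id = thm10

-- L4 = thm14

-- L3 = thm15

-- notbot = thm19


/-- Permutation (exchange). -/
theorem lperm (S : Set LForm) (a b c : LForm) :
    LProv S ((a.imp (b.imp c)).imp (b.imp (a.imp c))) :=
  lsyl (LProv.a2 a (LForm.imp b c) c)
    (LProv.mp (LProv.a2 b (LForm.imp (LForm.imp b c) c) (LForm.imp a c)) (thm6 S b c))

/-- Prefixing. -/
theorem lpre (S : Set LForm) (a b c : LForm) :
    LProv S ((b.imp c).imp ((a.imp b).imp (a.imp c))) :=
  LProv.mp (lperm S (LForm.imp a b) (LForm.imp b c) (LForm.imp a c)) (LProv.a2 a b c)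

/-- Contraposition. -/
theorem lcontra (S : Set LForm) (a b : LForm) :
    LProv S ((a.imp b).imp (b.neg.imp a.neg)) :=
  lsyl (lsyl (thm16 S a b)
      (LProv.mp (lpre S (LForm.neg (LForm.neg a)) b (LForm.neg (LForm.neg b))) (thm15 S b)))
    (LProv.a4 (LForm.neg a) (LForm.neg b))

end LAux

section Semantics

theorem imp_one (v : LEval) (α β : LForm) :
    v.w (α.imp β) = 1 ↔ v.w α ≤ v.w β := by
  rw [v.map_imp, min_eq_left_iff]
  constructor <;> intro h <;> linarith

/-- Soundness. -/
theorem lsound {S : Set LForm} {α : LForm} (h : LProv S α) : LSem S α := by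
  induction h with
  | hyp hm => intro v hv; exact hv _ hm
  | a0 α =>
      intro v hv
      have h0 := (v.mem01 α).1
      rw [imp_one, v.map_bot]; exact h0
  | a1 α β =>
      intro v hv
      have ha := v.mem01 α; have hb := v.mem01 β
      rw [imp_one, v.map_imp]
      rcases ha with ⟨ha0, ha1⟩; rcases hb with ⟨hb0, hb1⟩
      refine le_min ha1 (by linarith)
  | a2 α β γ =>
      intro v hv
      have ha := v.mem01 α; have hb := v.mem01 β; have hc := v.mem01 γ
      rw [imp_one]
      simp only [v.map_imp]
      rcases ha with ⟨ha0, ha1⟩; rcases hb with ⟨hb0, hb1⟩; rcases hc with ⟨hc0, hc1⟩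
      simp only [min_def]
      split_ifs <;> linarith
  | a3 α β =>
      intro v hv
      have ha := v.mem01 α; have hb := v.mem01 β
      rw [imp_one]
      simp only [v.map_imp]
      rcases ha with ⟨ha0, ha1⟩; rcases hb with ⟨hb0, hb1⟩
      simp only [min_def]
      split_ifs <;> linarith
  | a4 α β =>
      intro v hv
      have ha := v.mem01 α; have hb := v.mem01 β
      rw [imp_one]
      simp only [v.map_imp, v.map_neg]
      rcases ha with ⟨ha0, ha1⟩; rcases hb with ⟨hb0, hb1⟩
      simp only [min_def]
      split_ifs <;> linarith
  | mp h1 h2 ih1 ih2 =>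
      intro v hv
      have e1 := ih1 v hv
      have e2 := ih2 v hv
      rw [imp_one] at e1
      exact le_antisymm (v.mem01 _).2 (by rw [← e2]; exact e1)

theorem evalFun_mem01 (v : ℕ → ℝ) (hv : ∀ n, v n ∈ Set.Icc (0:ℝ) 1) (α : LForm) :
    evalFun v α ∈ Set.Icc (0:ℝ) 1 := by
  induction α with
  | var n => exact hv n
  | bot => simp [evalFun]
  | neg α ih =>
      rcases ih with ⟨h0, h1⟩
      exact ⟨by simp [evalFun]; linarith, by simp [evalFun]; linarith⟩
  | imp α β ihα ihβ =>
      rcases ihα with ⟨ha0, ha1⟩; rcases ihβ with ⟨hb0, hb1⟩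
      refine ⟨le_min (by norm_num) (by simp [evalFun]; linarith), min_le_left _ _⟩

/-- The canonical evaluation determined by an atomic assignment. -/
def canonEval (v : ℕ → ℝ) (hv : ∀ n, v n ∈ Set.Icc (0:ℝ) 1) : LEval where
  w := evalFun v
  mem01 := evalFun_mem01 v hv
  map_bot := rfl
  map_neg := fun _ => rfl
  map_imp := fun _ _ => rfl

end Semantics

/-- The key dichotomy: under the valuation X₁ ↦ 1, every one-variable formula
gets value 0 or 1, and accordingly either it or its negation is derivable from X₁. -/
theorem dichotomy (α : LForm) (h : α.onlyX1) :
    (evalFun (fun _ => 1) α = 1 ∧ LProv {LForm.X1} α) ∨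
    (evalFun (fun _ => 1) α = 0 ∧ LProv {LForm.X1} (LForm.neg α)) := by
  induction α with
  | var n =>
      left
      have hn : n = 0 := h
      subst hn
      exact ⟨rfl, LProv.hyp rfl⟩
  | bot => right; exact ⟨rfl, thm19 _⟩
  | neg α ih =>
      rcases ih h with ⟨h1, hp⟩ | ⟨h0, hp⟩
      · right
        refine ⟨?_, LProv.mp (thm15 _ α) hp⟩
        show 1 - evalFun (fun _ => 1) α = 0
        rw [h1]; ring
      · left
        refine ⟨?_, hp⟩
        show 1 - evalFun (fun _ => 1) α = 1
        rw [h0]; ring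
  | imp α β ihα ihβ =>
      rcases h with ⟨hα, hβ⟩
      rcases ihβ hβ with ⟨hb1, hpb⟩ | ⟨hb0, hpnb⟩
      · left
        refine ⟨?_, LProv.mp (LProv.a1 β α) hpb⟩
        show min 1 (1 - (evalFun (fun _ => 1) α - evalFun (fun _ => 1) β)) = 1
        rcases ihα hα with ⟨ha, _⟩ | ⟨ha, _⟩ <;> rw [ha, hb1] <;> norm_num
      · rcases ihα hα with ⟨ha1, hpa⟩ | ⟨ha0, hpna⟩
        · right
          constructor
          · show min 1 (1 - (evalFun (fun _ => 1) α - evalFun (fun _ => 1) β)) = 0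
            rw [ha1, hb0]; norm_num
          · have s1 : LProv {LForm.X1} ((α.imp β).imp β) := LProv.mp (thm6 _ α β) hpa
            have s2 : LProv {LForm.X1} (β.neg.imp (α.imp β).neg) :=
              LProv.mp (lcontra _ (α.imp β) β) s1
            exact LProv.mp s2 hpnb
        · left
          constructor
          · show min 1 (1 - (evalFun (fun _ => 1) α - evalFun (fun _ => 1) β)) = 1
            rw [ha0, hb0]; norm_num
          · exact LProv.mp (thm4 _ α β) hpna


/-- Axiomatisation of Θ₁: for every α ∈ Form₁, α ∈ Θ₁ iff {X₁} ⊢ α. -/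
theorem Theta_one_axiomatised (α : LForm) (hα : α ∈ Form1) :
    α ∈ Theta 1 ↔ LProv {LForm.X1} α := by
  constructor
  · rintro ⟨-, hall⟩
    have hv : ∀ n, (fun _ : ℕ => (1:ℝ)) n ∈ Set.Icc (0:ℝ) 1 := fun n => by norm_num
    have h1 := hall (canonEval (fun _ : ℕ => 1) hv) rfl
    have h1' : evalFun (fun _ : ℕ => 1) α = 1 := h1
    rcases dichotomy α hα with ⟨-, hp⟩ | ⟨h0, -⟩
    · exact hp
    · rw [h0] at h1'; norm_num at h1'
  · intro hp
    refine ⟨hα, fun v hv1 => ?_⟩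
    exact lsound hp v (fun β hβ => by rw [Set.mem_singleton_iff] at hβ; rw [hβ, hv1])
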